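/- A loop L is a C-loop if and only if L is a left alternative RC-loop. -/
import Mathlib

theorem stmt {L : Type*} (mul : L → L → L) (e : L)
    (hid : ∀ x, mul e x = x ∧ mul x e = x)
    (hLbij : ∀ a, Function.Bijective (fun x => mul a x))
    (hRbij : ∀ a, Function.Bijective (fun x => mul x a)) :
    (∀ x y z, mul x (mul y (mul y z)) = mul (mul (mul x y) y) z) ↔
      ((∀ x y, mul x (mul x y) = mul (mul x x) y) ∧
        (∀ x y z, mul (mul (mul z y) y) x = mul z (mul (mul y y) x))) := by
  constructor
  · intro hC
    have hLA : ∀ x y, mul x (mul x y) = mul (mul x x) y := by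
      intro x y
      have := hC e x y
      simpa [(hid x).1, (hid (mul x (mul x y))).1] using this
    refine ⟨hLA, fun x y z => ?_⟩
    rw [← hC z y x, ← hLA y x]
  · rintro ⟨hLA, hRC⟩ x y z
    rw [hRC z y x, hLA y z]
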